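/- arXiv:1812.04476 — 2 statements merged into one kernel-verified Lean document; each statement's English description precedes it below -/
import Mathlib

section
/- (Theorem 3) Let c_a > 0 and c_b > 0 and let T_a, T_b be independent random variables with Lévy densities of scales c_a and c_b respectively. Then the characteristic function of the noise Z_n = T_b − T_a satisfies, for every real ω: ∫₀^∞ ∫₀^∞ exp(i ω (t_b − t_a)) · f_{c_b}(t_b) · f_{c_a}(t_a) dt_a dt_b = exp( −(√c_a + √c_b)·√|ω| + i · sgn(ω) · (√c_b − √c_a)·√|ω| ). Equivalently, with c_C = (√c_a + √c_b)² and β_C = (√c_b − √c_a)/(√c_a + √c_b), the characteristic function equals exp(−√(c_C|ω|)·(1 − i β_C sgn(ω))), so Z_n is stable with stability index 1/2, scale c_C, and skewness β_C. -/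
open MeasureTheory Set

/-- The Lévy density with location 0 and scale `c`. -/
noncomputable def levyPDF (c x : ℝ) : ℝ :=
  if 0 < x then Real.sqrt (c / (2 * Real.pi * x ^ 3)) * Real.exp (-c / (2 * x)) else 0

/-!
Substituting `t = c / (2u²)` turns the characteristic function of the Lévy law of scale `c`
into `(2/√π) ∫₀^∞ exp(-u² - a/u²) du` with `a = -iωc/2`. For real `a = r² > 0`, completing
the square `u² + r²/u² = (u - r/u)² + 2r` and the Cauchy–Schlömilch substitution
`v = u - r/u` evaluate this integral as `(√π/2) e^{-2r}`. Both sides are holomorphic in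
`Re a > 0` and continuous on `Re a ≥ 0`, so the identity
`∫₀^∞ exp(-u² - a/u²) du = (√π/2) exp(-2√a)` extends to the imaginary axis. By independence,
the characteristic function of `T_b - T_a` is `φ_b(ω) φ_a(-ω)`.
-/

open Filter Topology Real Complex

theorem image_div_pow_Ioi {b : ℝ} (hb : 0 < b) {n : ℕ} (hn : n ≠ 0) :
    (fun u : ℝ => b / u ^ n) '' Ioi 0 = Ioi 0 := by
  ext t
  simp only [mem_image, mem_Ioi]
  constructor
  · rintro ⟨u, hu, rfl⟩
    positivity
  · intro ht
    refine ⟨(b / t) ^ (n⁻¹ : ℝ), by positivity, ?_⟩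
    rw [Real.rpow_inv_natCast_pow (by positivity) hn]
    field_simp

theorem integral_comp_div_pow_Ioi {E : Type*} [NormedAddCommGroup E] [NormedSpace ℝ E]
    (g : ℝ → E) {b : ℝ} (hb : 0 < b) {n : ℕ} (hn : n ≠ 0) :
    ∫ u in Ioi 0, (n * b / u ^ (n + 1)) • g (b / u ^ n) = ∫ t in Ioi 0, g t := by
  have hderiv : ∀ u ∈ Ioi (0 : ℝ),
      HasDerivWithinAt (fun u : ℝ => b / u ^ n) (-(n * b / u ^ (n + 1))) (Ioi 0) u := by
    intro u hu
    have hu : u ≠ 0 := ne_of_gt hu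
    refine ((hasDerivAt_const u b).div (hasDerivAt_pow n u) (pow_ne_zero n hu))
      |>.hasDerivWithinAt.congr_deriv ?_
    obtain ⟨m, rfl⟩ := Nat.exists_eq_add_one_of_ne_zero hn
    rw [Nat.add_sub_cancel]
    field_simp
    ring
  have hanti : StrictAntiOn (fun u : ℝ => b / u ^ n) (Ioi 0) := fun u hu w _ huw =>
    div_lt_div_of_pos_left hb (pow_pos hu n) (pow_lt_pow_left₀ huw (le_of_lt hu) hn)
  have hsub := integral_image_eq_integral_abs_deriv_smul measurableSet_Ioi hderiv hanti.injOn g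
  rw [image_div_pow_Ioi hb hn] at hsub
  rw [hsub]
  refine setIntegral_congr_fun measurableSet_Ioi fun u hu => ?_
  have hu : (0 : ℝ) < u := hu
  rw [abs_neg, abs_of_pos (by positivity)]

theorem image_sub_div_Ioi {b : ℝ} (hb : 0 < b) : (fun u : ℝ => u - b / u) '' Ioi 0 = univ := by
  refine eq_univ_of_forall fun v => ?_
  have hdisc : 0 < v ^ 2 + 4 * b := by positivity
  have hroot : -v < √(v ^ 2 + 4 * b) :=
    (neg_le_abs v).trans_lt <| by
      rw [← Real.sqrt_sq_eq_abs]; exact Real.sqrt_lt_sqrt (sq_nonneg v) (by linarith)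
  set u := (v + √(v ^ 2 + 4 * b)) / 2 with hu_def
  have hu : 0 < u := by linarith
  have hbu : b / u = u - v := by
    rw [div_eq_iff hu.ne', hu_def]
    nlinarith [Real.sq_sqrt hdisc.le]
  refine ⟨u, hu, ?_⟩
  simp only [hbu, sub_sub_cancel]

theorem strictMonoOn_sub_div {b : ℝ} (hb : 0 ≤ b) :
    StrictMonoOn (fun u : ℝ => u - b / u) (Ioi 0) :=
  fun u hu _ _ huw => by
    have := div_le_div_of_nonneg_left hb hu huw.le
    simp only
    linarith

theorem hasDerivAt_sub_div (b : ℝ) {u : ℝ} (hu : u ≠ 0) :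
    HasDerivAt (fun u : ℝ => u - b / u) (1 + b / u ^ 2) u := by
  refine ((hasDerivAt_id u).sub ((hasDerivAt_const u b).div (hasDerivAt_id u) hu)).congr_deriv ?_
  simp only [id]
  ring

section SubDiv

variable {E : Type*} [NormedAddCommGroup E] [NormedSpace ℝ E] {b : ℝ}

theorem integral_comp_sub_div_Ioi (g : ℝ → E) (hb : 0 < b) :
    ∫ u in Ioi 0, (1 + b / u ^ 2) • g (u - b / u) = ∫ v, g v := by
  have hsub := integral_image_eq_integral_abs_deriv_smul measurableSet_Ioi
    (fun u hu => (hasDerivAt_sub_div b (ne_of_gt hu)).hasDerivWithinAt)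
    (strictMonoOn_sub_div hb.le).injOn g
  rw [image_sub_div_Ioi hb, Measure.restrict_univ] at hsub
  rw [hsub]
  refine setIntegral_congr_fun measurableSet_Ioi fun u _ => ?_
  rw [abs_of_pos (by positivity)]

theorem integrableOn_comp_sub_div_Ioi_iff (g : ℝ → E) (hb : 0 < b) :
    IntegrableOn (fun u => (1 + b / u ^ 2) • g (u - b / u)) (Ioi 0) ↔ Integrable g := by
  rw [← integrableOn_univ, ← image_sub_div_Ioi hb,
    integrableOn_image_iff_integrableOn_abs_deriv_smul measurableSet_Ioi
      (fun u hu => (hasDerivAt_sub_div b (ne_of_gt hu)).hasDerivWithinAt)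
      (strictMonoOn_sub_div hb.le).injOn]
  refine integrableOn_congr_fun (fun u _ => ?_) measurableSet_Ioi
  rw [abs_of_pos (by positivity)]

end SubDiv

theorem integral_exp_neg_sq_sub_div {b : ℝ} (hb : 0 < b) :
    ∫ u in Ioi 0, rexp (-(u - b / u) ^ 2) = √π / 2 := by
  set h : ℝ → ℝ := fun u => rexp (-(u - b / u) ^ 2) with h_def
  have hfull : ∫ u in Ioi 0, (1 + b / u ^ 2) * h u = √π := by
    simpa using (integral_comp_sub_div_Ioi (fun v => rexp (-v ^ 2)) hb).trans
      (by simpa using integral_gaussian 1)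
  have hfull_int : IntegrableOn (fun u => (1 + b / u ^ 2) * h u) (Ioi 0) :=
    (integrableOn_comp_sub_div_Ioi_iff (fun v => rexp (-v ^ 2)) hb).2
      (by simpa using integrable_exp_neg_mul_sq one_pos)
  have h_int : IntegrableOn h (Ioi 0) := by
    refine hfull_int.mono' (by fun_prop) (ae_of_all _ fun u => ?_)
    rw [Real.norm_of_nonneg (by positivity)]
    exact le_mul_of_one_le_left (by positivity) (le_add_of_nonneg_right (by positivity))
  -- `u ↦ b / u` preserves `h` and has Jacobian `b / u²`
  have hinv : ∫ u in Ioi 0, b / u ^ 2 * h u = ∫ u in Ioi 0, h u := by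
    rw [← integral_comp_div_pow_Ioi h hb one_ne_zero]
    refine setIntegral_congr_fun measurableSet_Ioi fun u hu => ?_
    have hu : (0 : ℝ) < u := hu
    simp only [h_def, smul_eq_mul, pow_one, Nat.cast_one, one_mul]
    congr 3
    field_simp
    ring
  have hsplit : (fun u => (1 + b / u ^ 2) * h u) = fun u => h u + b / u ^ 2 * h u := by
    ext u; ring
  rw [hsplit, integral_add h_int, hinv] at hfull
  · linarith
  · exact (hfull_int.sub h_int).congr_fun (fun u _ => by simp only [Pi.sub_apply]; ring)
      measurableSet_Ioi

theorem integral_exp_neg_sq_sub_sq_div_sq {r : ℝ} (hr : 0 < r) :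
    ∫ u in Ioi 0, rexp (-u ^ 2 - r ^ 2 / u ^ 2) = √π / 2 * rexp (-(2 * r)) := by
  have hcompl : ∀ u ∈ Ioi (0 : ℝ),
      rexp (-u ^ 2 - r ^ 2 / u ^ 2) = rexp (-(2 * r)) * rexp (-(u - r / u) ^ 2) := by
    intro u hu
    have hu : u ≠ 0 := ne_of_gt hu
    rw [← Real.exp_add]
    congr 1
    field_simp
    ring
  rw [setIntegral_congr_fun measurableSet_Ioi hcompl, integral_const_mul,
    integral_exp_neg_sq_sub_div hr, mul_comm]

noncomputable def gaussInvSqIntegral (a : ℂ) : ℂ :=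
  ∫ u in Ioi (0 : ℝ), cexp (-(u : ℂ) ^ 2 - a / (u : ℂ) ^ 2)

theorem norm_cexp_neg_sq_sub_div_sq (a : ℂ) (u : ℝ) :
    ‖cexp (-(u : ℂ) ^ 2 - a / (u : ℂ) ^ 2)‖ = rexp (-u ^ 2 - a.re / u ^ 2) := by
  rw [norm_exp, ← ofReal_pow, sub_re, div_ofReal_re, neg_re, ofReal_re]

theorem norm_cexp_neg_sq_sub_div_sq_le {a : ℂ} (ha : 0 ≤ a.re) (u : ℝ) :
    ‖cexp (-(u : ℂ) ^ 2 - a / (u : ℂ) ^ 2)‖ ≤ rexp (-u ^ 2) := by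
  rw [norm_cexp_neg_sq_sub_div_sq]
  gcongr
  linarith [div_nonneg ha (sq_nonneg u)]

theorem integrableOn_exp_neg_sq_Ioi : IntegrableOn (fun u : ℝ => rexp (-u ^ 2)) (Ioi 0) := by
  simpa using (integrable_exp_neg_mul_sq one_pos).integrableOn

theorem aestronglyMeasurable_cexp_neg_sq_sub_div_sq (a : ℂ) (μ : Measure ℝ) :
    AEStronglyMeasurable (fun u : ℝ => cexp (-(u : ℂ) ^ 2 - a / (u : ℂ) ^ 2)) μ :=
  (by fun_prop : Measurable _).aestronglyMeasurable

theorem continuousOn_gaussInvSqIntegral : ContinuousOn gaussInvSqIntegral {a | 0 ≤ a.re} :=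
  continuousOn_of_dominated (fun a _ => aestronglyMeasurable_cexp_neg_sq_sub_div_sq a _)
    (fun _ ha => ae_of_all _ (norm_cexp_neg_sq_sub_div_sq_le ha)) integrableOn_exp_neg_sq_Ioi
    (ae_of_all _ fun _ => by fun_prop)

theorem inv_sq_mul_exp_neg_le {δ x u : ℝ} (hδ : 0 < δ) (hx : δ ≤ x) :
    (u ^ 2)⁻¹ * rexp (-u ^ 2 - x / u ^ 2) ≤ δ⁻¹ * rexp (-u ^ 2) := by
  set y := (u ^ 2)⁻¹
  have hy : 0 ≤ y := by positivity
  have hexp : rexp (-u ^ 2 - x / u ^ 2) ≤ rexp (-u ^ 2) * rexp (-(δ * y)) := by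
    rw [← Real.exp_add]
    gcongr
    rw [div_eq_mul_inv]
    nlinarith
  have hlin : δ * y * rexp (-(δ * y)) ≤ 1 :=
    (Real.mul_exp_neg_le_exp_neg_one _).trans (by simp)
  calc y * rexp (-u ^ 2 - x / u ^ 2) ≤ y * (rexp (-u ^ 2) * rexp (-(δ * y))) := by gcongr
    _ = δ⁻¹ * (δ * y * rexp (-(δ * y))) * rexp (-u ^ 2) := by field_simp
    _ ≤ δ⁻¹ * 1 * rexp (-u ^ 2) := by gcongr
    _ = δ⁻¹ * rexp (-u ^ 2) := by ring

theorem differentiableAt_gaussInvSqIntegral {a₀ : ℂ} (ha₀ : 0 < a₀.re) :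
    DifferentiableAt ℂ gaussInvSqIntegral a₀ := by
  set δ := a₀.re / 2 with hδ_def
  have hδ : 0 < δ := by positivity
  have hre : ∀ a ∈ Metric.ball a₀ δ, δ ≤ a.re := fun a ha => by
    have := (abs_le.mp (abs_re_le_norm (a - a₀))).1
    rw [Metric.mem_ball, Complex.dist_eq] at ha
    simp only [sub_re] at this
    linarith [hδ_def]
  have hderiv : ∀ (u : ℝ) (a : ℂ), HasDerivAt (fun a => cexp (-(u : ℂ) ^ 2 - a / (u : ℂ) ^ 2))
      (cexp (-(u : ℂ) ^ 2 - a / (u : ℂ) ^ 2) * -((u : ℂ) ^ 2)⁻¹) a := fun u a => by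
    simpa using (((hasDerivAt_id a).div_const ((u : ℂ) ^ 2)).const_sub (-(u : ℂ) ^ 2)).cexp
  refine (hasDerivAt_integral_of_dominated_loc_of_deriv_le (Metric.ball_mem_nhds a₀ hδ)
    (Eventually.of_forall fun a => aestronglyMeasurable_cexp_neg_sq_sub_div_sq a _)
    ?_ ?_ ?_ (integrableOn_exp_neg_sq_Ioi.const_mul δ⁻¹) (ae_of_all _ fun u a _ => hderiv u a)
    ).2.differentiableAt
  · exact integrableOn_exp_neg_sq_Ioi.mono' (aestronglyMeasurable_cexp_neg_sq_sub_div_sq a₀ _)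
      (ae_of_all _ (norm_cexp_neg_sq_sub_div_sq_le ha₀.le))
  · exact (aestronglyMeasurable_cexp_neg_sq_sub_div_sq a₀ _).mul
      (by fun_prop : Measurable _).aestronglyMeasurable
  · refine ae_of_all _ fun u a ha => ?_
    rw [norm_mul, norm_cexp_neg_sq_sub_div_sq, norm_neg, norm_inv, ← ofReal_pow, norm_real,
      Real.norm_of_nonneg (sq_nonneg u), mul_comm]
    exact inv_sq_mul_exp_neg_le hδ (hre a ha)

theorem gaussInvSqIntegral_ofReal {r : ℝ} (hr : 0 < r) :
    gaussInvSqIntegral r = (√π : ℂ) / 2 * cexp (-2 * (r : ℂ) ^ (2⁻¹ : ℂ)) := by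
  have hsqrt : (r : ℂ) ^ (2⁻¹ : ℂ) = ((√r : ℝ) : ℂ) := by
    rw [Real.sqrt_eq_rpow, ofReal_cpow hr.le]
    norm_num
  have hintegrand : ∀ u : ℝ, cexp (-(u : ℂ) ^ 2 - r / (u : ℂ) ^ 2)
      = ((rexp (-u ^ 2 - √r ^ 2 / u ^ 2) : ℝ) : ℂ) := fun u => by
    rw [Real.sq_sqrt hr.le, ofReal_exp]
    push_cast
    rfl
  rw [gaussInvSqIntegral, integral_congr_ae (ae_of_all _ hintegrand), integral_complex_ofReal,
    integral_exp_neg_sq_sub_sq_div_sq (Real.sqrt_pos.mpr hr), hsqrt]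
  push_cast
  ring_nf

theorem gaussInvSqIntegral_eq {a : ℂ} (ha : 0 ≤ a.re) :
    gaussInvSqIntegral a = (√π : ℂ) / 2 * cexp (-2 * a ^ (2⁻¹ : ℂ)) := by
  set H : ℂ → ℂ := fun a => (√π : ℂ) / 2 * cexp (-2 * a ^ (2⁻¹ : ℂ))
  have hopen : IsOpen {a : ℂ | 0 < a.re} := isOpen_lt continuous_const continuous_re
  have hG : AnalyticOnNhd ℂ gaussInvSqIntegral {a : ℂ | 0 < a.re} :=
    DifferentiableOn.analyticOnNhd
      (fun a ha => (differentiableAt_gaussInvSqIntegral ha).differentiableWithinAt) hopen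
  have hH : AnalyticOnNhd ℂ H {a : ℂ | 0 < a.re} :=
    DifferentiableOn.analyticOnNhd (fun a ha =>
      ((differentiableAt_id.cpow_const (Or.inl ha)).const_mul _).cexp.const_mul _
        |>.differentiableWithinAt) hopen
  have hreal : ∀ᶠ x : ℝ in 𝓝[≠] 1, gaussInvSqIntegral x = H x :=
    eventually_nhdsWithin_of_eventually_nhds
      ((lt_mem_nhds (zero_lt_one' ℝ)).mono fun _ hx => gaussInvSqIntegral_ofReal hx)
  have hofReal : Tendsto ((↑) : ℝ → ℂ) (𝓝[≠] 1) (𝓝[≠] 1) := by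
    have := (continuous_ofReal.continuousWithinAt (x := 1)).tendsto_nhdsWithin
      (s := {(1 : ℝ)}ᶜ) (t := {(1 : ℂ)}ᶜ) fun x hx => by simpa using hx
    rwa [ofReal_one] at this
  have hright : EqOn gaussInvSqIntegral H {a : ℂ | 0 < a.re} :=
    hG.eqOn_of_preconnected_of_frequently_eq hH (convex_halfSpace_re_gt 0).isPreconnected
      (by simp) (hofReal.frequently hreal.frequently)
  have hH_cont : ContinuousOn H {a : ℂ | 0 ≤ a.re} := fun a ha =>
    (continuousAt_const.mul (continuous_exp.continuousAt.comp (continuousAt_const.mul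
      (continuousAt_cpow_const_of_re_pos (Or.inl ha) (by norm_num))))).continuousWithinAt
  exact hright.of_subset_closure continuousOn_gaussInvSqIntegral hH_cont
    (ofPred_subset_ofPred.mpr fun _ => le_of_lt) (closure_setOfPred_lt_re 0).symm.subset ha

theorem levyPDF_div_sq {c u : ℝ} (hc : 0 < c) (hu : 0 < u) :
    c / u ^ 3 * levyPDF c (c / 2 / u ^ 2) = 2 / √π * rexp (-u ^ 2) := by
  have hexp : -c / (2 * (c / 2 / u ^ 2)) = -u ^ 2 := by field_simp
  have hsqrt : c / (2 * π * (c / 2 / u ^ 2) ^ 3) = (2 * u ^ 3 / (√π * c)) ^ 2 := by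
    rw [div_pow (2 * u ^ 3), mul_pow √π, Real.sq_sqrt Real.pi_pos.le]
    field_simp
  rw [levyPDF, if_pos (by positivity), hexp, hsqrt, Real.sqrt_sq (by positivity)]
  field_simp

-- The Lévy law of scale `c` is the law of `c / (2U²)` for a half-normal `U`.
theorem integral_levyPDF_smul {E : Type*} [NormedAddCommGroup E] [NormedSpace ℝ E]
    (g : ℝ → E) {c : ℝ} (hc : 0 < c) :
    ∫ t in Ioi 0, levyPDF c t • g t
      = ∫ u in Ioi 0, (2 / √π * rexp (-u ^ 2)) • g (c / 2 / u ^ 2) := by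
  rw [← integral_comp_div_pow_Ioi _ (half_pos hc) two_ne_zero]
  refine setIntegral_congr_fun measurableSet_Ioi fun u hu => ?_
  rw [smul_smul, ← levyPDF_div_sq hc hu]
  norm_num
  ring_nf

theorem cpow_two_inv_neg_I_mul {c : ℝ} (hc : 0 < c) (ω : ℝ) :
    (-(I * (ω * c / 2))) ^ (2⁻¹ : ℂ)
      = ((√c * √|ω| / 2 : ℝ) : ℂ) * (1 - I * (Real.sign ω : ℝ)) := by
  rcases eq_or_ne ω 0 with rfl | hω
  · simp
  have hsign : Real.sign ω ^ 2 = 1 ∧ |ω| * Real.sign ω = ω := by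
    rcases lt_or_gt_of_ne hω with hneg | hpos
    · simp [Real.sign_of_neg hneg, abs_of_neg hneg]
    · simp [Real.sign_of_pos hpos, abs_of_pos hpos]
  have hmod : ((√c * √|ω| / 2 : ℝ) : ℂ) ^ 2 = ((c * |ω| / 4 : ℝ) : ℂ) := by
    rw [← ofReal_pow, div_pow, mul_pow, Real.sq_sqrt hc.le, Real.sq_sqrt (abs_nonneg ω)]
    norm_num
  rw [← sq_cpow_two_inv (x := ((√c * √|ω| / 2 : ℝ) : ℂ) * (1 - I * (Real.sign ω : ℝ)))]
  · congr 1
    rw [mul_pow, hmod]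
    have hσ : ((Real.sign ω : ℝ) : ℂ) ^ 2 = 1 := by exact_mod_cast hsign.1
    have habs : ((|ω| : ℝ) : ℂ) * (Real.sign ω : ℝ) = ω := by exact_mod_cast hsign.2
    push_cast
    linear_combination (-(c * ((|ω| : ℝ) : ℂ) / 4) * ((Real.sign ω : ℝ) : ℂ) ^ 2) * I_sq
      + (c * ((|ω| : ℝ) : ℂ) / 4) * hσ + (c * I / 2) * habs
  · simp [Real.sqrt_pos.mpr hc, abs_pos.mpr hω]

theorem integral_cexp_mul_levyPDF {c : ℝ} (hc : 0 < c) (ω : ℝ) :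
    ∫ t in Ioi (0 : ℝ), cexp (I * ω * t) * (levyPDF c t : ℂ)
      = cexp (-((√c * √|ω| : ℝ) : ℂ) * (1 - I * (Real.sign ω : ℝ))) := by
  set a : ℂ := -(I * (ω * c / 2)) with ha
  have hintegrand : ∀ u : ℝ,
      (2 / √π * rexp (-u ^ 2)) • cexp (I * ω * ((c / 2 / u ^ 2 : ℝ) : ℂ))
      = (2 / √π : ℂ) * cexp (-(u : ℂ) ^ 2 - a / (u : ℂ) ^ 2) := fun u => by
    rw [real_smul, ofReal_mul, ofReal_exp, mul_assoc, ← Complex.exp_add, ha]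
    push_cast
    ring_nf
  have hnorm : (2 / √π : ℂ) * (√π / 2) = 1 := by
    have : (√π : ℂ) ≠ 0 := ofReal_ne_zero.mpr (Real.sqrt_pos.mpr Real.pi_pos).ne'
    field_simp
  calc ∫ t in Ioi (0 : ℝ), cexp (I * ω * t) * (levyPDF c t : ℂ)
      = ∫ t in Ioi 0, levyPDF c t • cexp (I * ω * t) := by simp only [real_smul, mul_comm]
    _ = (2 / √π : ℂ) * gaussInvSqIntegral a := by
      rw [integral_levyPDF_smul _ hc, gaussInvSqIntegral, ← integral_const_mul]
      simp only [hintegrand]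
    _ = cexp (-2 * a ^ (2⁻¹ : ℂ)) := by
      rw [gaussInvSqIntegral_eq (by simp [a]), ← mul_assoc, hnorm, one_mul]
    _ = cexp (-((√c * √|ω| : ℝ) : ℂ) * (1 - I * (Real.sign ω : ℝ))) := by
      rw [cpow_two_inv_neg_I_mul hc]
      push_cast
      ring_nf

theorem integral_integral_cexp_mul_sub (f g : ℝ → ℝ) (s : Set ℝ) (ω : ℝ) :
    ∫ y in s, ∫ x in s, cexp (I * ω * (y - x)) * (f y : ℂ) * (g x : ℂ)
      = (∫ y in s, cexp (I * ω * y) * (f y : ℂ))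
        * ∫ x in s, cexp (I * (-ω : ℝ) * x) * (g x : ℂ) := by
  rw [← integral_mul_const]
  congr 1 with y
  rw [← integral_const_mul]
  congr 1 with x
  rw [mul_sub, sub_eq_add_neg, Complex.exp_add]
  push_cast
  ring_nf

/-- Theorem 3: the characteristic function of the system C noise `Z_n = T_b - T_a`,
with `T_a, T_b` independent Lévy with scales `c_a, c_b`. With
`c_C = (√c_a + √c_b)²` and `β_C = (√c_b - √c_a)/(√c_a + √c_b)` it equals
`exp(-√(c_C|ω|)(1 - i β_C sgn ω))`. -/
theorem systemC_noise_charFun (ca cb : ℝ) (hca : 0 < ca) (hcb : 0 < cb)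
    (cC βC : ℝ) (hcC : cC = (Real.sqrt ca + Real.sqrt cb) ^ 2)
    (hβC : βC = (Real.sqrt cb - Real.sqrt ca) / (Real.sqrt ca + Real.sqrt cb)) :
    ∀ ω : ℝ,
      (∫ tb in Set.Ioi (0:ℝ), ∫ ta in Set.Ioi (0:ℝ),
          Complex.exp (Complex.I * ω * (tb - ta)) * (levyPDF cb tb : ℂ) * (levyPDF ca ta : ℂ))
        = Complex.exp (-((Real.sqrt ca + Real.sqrt cb) * Real.sqrt |ω| : ℝ)
            + Complex.I * (Real.sign ω : ℝ) * ((Real.sqrt cb - Real.sqrt ca) * Real.sqrt |ω| : ℝ))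
      ∧ Complex.exp (-((Real.sqrt ca + Real.sqrt cb) * Real.sqrt |ω| : ℝ)
            + Complex.I * (Real.sign ω : ℝ) * ((Real.sqrt cb - Real.sqrt ca) * Real.sqrt |ω| : ℝ))
        = Complex.exp (-(Real.sqrt (cC * |ω|) : ℝ)
            * (1 - Complex.I * (βC : ℝ) * (Real.sign ω : ℝ))) := by
  intro ω
  refine ⟨?_, ?_⟩
  · rw [integral_integral_cexp_mul_sub, integral_cexp_mul_levyPDF hcb,
      integral_cexp_mul_levyPDF hca, ← Complex.exp_add, abs_neg, Real.sign_neg]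
    push_cast
    ring_nf
  · have hscale : √(cC * |ω|) = (√ca + √cb) * √|ω| := by
      rw [hcC, Real.sqrt_mul (sq_nonneg _), Real.sqrt_sq (by positivity)]
    have hskew : (√ca + √cb) * βC = √cb - √ca := by
      rw [hβC]
      field_simp
    rw [hscale, ← hskew]
    push_cast
    ring_nf
end

section
/- (Existence of the ML threshold for system A) Let c > 0 and Δ > 0. Then there exists a threshold th_A with Δ < th_A ≤ c/3 + Δ such that for every t with 0 < t < th_A one has f_c(t) > f_c(t − Δ), and for every t ≥ th_A one has f_c(t) ≤ f_c(t − Δ), where f_c is the Lévy density with scale c (extended by 0 to nonpositive arguments). Consequently, the maximum-likelihood detector for equiprobable binary inputs T_x ∈ {0, Δ} observed through the additive Lévy noise channel T_y = T_x + T_n, T_n Lévy with scale c, is a single-threshold rule: decide T_x = 0 when T_y < th_A and T_x = Δ when T_y ≥ th_A. -/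
open MeasureTheory Set

/-!
For `t > Δ` put `u = log (t / (t - Δ)) > 0`. Comparing log-densities, `f_c(t) ≤ f_c(t - Δ)` iff
`φ(u) = 3u - (2c/Δ)(cosh u - 1) ≥ 0`. Since `φ` is concave with `φ(0) = 0` and `u` decreases in `t`,
the set `S` of `t ≥ Δ` with `f_c(t) ≤ f_c(t - Δ)` is an up-set. It is closed because `f_c` is
continuous, it contains `c/3 + Δ` because `f_c` decreases beyond its mode `c/3`, and it misses `Δ`
because `f_c(0) = 0`; so `th_A = inf S` works.
-/

open Real Filter Topology

lemma Real.convexOn_cosh : ConvexOn ℝ univ cosh := by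
  refine ((convexOn_exp.add (convexOn_exp.comp_linearMap (-LinearMap.id))).smul
    (by norm_num : (0 : ℝ) ≤ 1 / 2)).congr fun u _ => ?_
  change 1 / 2 * (exp u + exp (-u)) = cosh u
  rw [cosh_eq]
  ring

lemma concaveOn_mul_sub_mul_cosh_sub_one (a : ℝ) {k : ℝ} (hk : 0 ≤ k) :
    ConcaveOn ℝ univ fun u => a * u - k * (cosh u - 1) :=
  ((LinearMap.mul ℝ ℝ a).concaveOn convex_univ).sub ((convexOn_cosh.add_const (-1)).smul hk)

section LevyDensity

variable {c Δ s t x : ℝ}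

lemma levyPDF_of_nonpos (hx : x ≤ 0) : levyPDF c x = 0 := if_neg hx.not_gt

lemma levyPDF_pos (hc : 0 < c) (hx : 0 < x) : 0 < levyPDF c x := by
  rw [levyPDF, if_pos hx]
  positivity

lemma levyPDF_eq_rpow_mul_exp (hx : 0 < x) :
    levyPDF c x = √(c / (2 * π)) * (x⁻¹ ^ (3 / 2 : ℝ) * exp (-(c / 2) * x⁻¹)) := by
  have hx3 : √(x ^ 3) = x ^ (3 / 2 : ℝ) := by
    rw [sqrt_eq_rpow, ← rpow_natCast, ← rpow_mul hx.le]
    norm_num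
  rw [levyPDF, if_pos hx, div_mul_eq_div_div, sqrt_div' _ (by positivity), hx3, inv_rpow hx.le,
    div_eq_mul_inv]
  ring_nf

lemma tendsto_levyPDF_nhdsGT_zero (hc : 0 < c) : Tendsto (levyPDF c) (𝓝[>] 0) (𝓝 0) := by
  have h := ((tendsto_rpow_mul_exp_neg_mul_atTop_nhds_zero (3 / 2) (c / 2) (by positivity)).comp
    tendsto_inv_nhdsGT_zero).const_mul √(c / (2 * π))
  rw [mul_zero] at h
  exact h.congr' (eventually_nhdsWithin_of_forall fun x hx => (levyPDF_eq_rpow_mul_exp hx).symm)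

lemma continuous_levyPDF (hc : 0 < c) : Continuous (levyPDF c) := by
  refine continuous_iff_continuousAt.2 fun x => ?_
  rcases lt_trichotomy x 0 with hx | rfl | hx
  · exact continuousAt_const.congr
      ((eventually_lt_nhds hx).mono fun y hy => (levyPDF_of_nonpos hy.le).symm)
  · have h : Tendsto (levyPDF c) (𝓝[≤] 0 ⊔ 𝓝[>] 0) (𝓝 0) :=
      (tendsto_const_nhds.congr' (eventually_nhdsWithin_of_forall fun y hy =>
        (levyPDF_of_nonpos hy).symm)).sup (tendsto_levyPDF_nhdsGT_zero hc)
    rw [nhdsLE_sup_nhdsGT] at h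
    rwa [ContinuousAt, levyPDF_of_nonpos le_rfl]
  · have h : ContinuousAt
        (fun y => √(c / (2 * π)) * (y⁻¹ ^ (3 / 2 : ℝ) * exp (-(c / 2) * y⁻¹))) x := by
      fun_prop (disch := positivity)
    exact h.congr ((eventually_gt_nhds hx).mono fun y hy => (levyPDF_eq_rpow_mul_exp hy).symm)

lemma log_levyPDF (hc : 0 < c) (hx : 0 < x) :
    log (levyPDF c x) = (log (c / (2 * π)) - 3 * log x - c / x) / 2 := by
  rw [levyPDF, if_pos hx, log_mul (by positivity) (exp_ne_zero _), log_sqrt (by positivity),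
    log_exp, div_mul_eq_div_div, log_div (by positivity) (by positivity), log_pow]
  push_cast
  field_simp
  ring

lemma levyPDF_le_levyPDF_iff (hc : 0 < c) (hs : 0 < s) (ht : 0 < t) :
    levyPDF c t ≤ levyPDF c s ↔ c / s - c / t ≤ 3 * log (t / s) := by
  rw [← log_le_log_iff (levyPDF_pos hc ht) (levyPDF_pos hc hs), log_levyPDF hc ht,
    log_levyPDF hc hs, log_div ht.ne' hs.ne']
  constructor <;> intro h <;> linarith

lemma antitoneOn_levyPDF (hc : 0 < c) : AntitoneOn (levyPDF c) (Ici (c / 3)) := by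
  intro s hs t ht hst
  have hs₀ : 0 < s := (div_pos hc three_pos).trans_le hs
  have ht₀ : 0 < t := hs₀.trans_le hst
  rw [levyPDF_le_levyPDF_iff hc hs₀ ht₀]
  calc c / s - c / t = c / s * (1 - (t / s)⁻¹) := by field_simp
    _ ≤ 3 * (1 - (t / s)⁻¹) := by
        gcongr
        · rw [sub_nonneg, inv_div]
          exact div_le_one_of_le₀ hst ht₀.le
        · rw [div_le_iff₀ hs₀]
          linarith [mem_Ici.1 hs]
    _ ≤ 3 * log (t / s) := by gcongr; exact one_sub_inv_le_log_of_pos (by positivity)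

lemma div_sub_sub_div_eq_cosh_log (hΔ : 0 < Δ) (ht : Δ < t) :
    c / (t - Δ) - c / t = 2 * c / Δ * (cosh (log (t / (t - Δ))) - 1) := by
  have ht₀ : 0 < t := hΔ.trans ht
  have hs : 0 < t - Δ := sub_pos.2 ht
  rw [cosh_log (div_pos ht₀ hs)]
  field_simp
  ring

lemma levyPDF_le_levyPDF_sub_iff (hc : 0 < c) (hΔ : 0 < Δ) (ht : Δ < t) :
    levyPDF c t ≤ levyPDF c (t - Δ) ↔
      0 ≤ 3 * log (t / (t - Δ)) - 2 * c / Δ * (cosh (log (t / (t - Δ))) - 1) := by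
  rw [levyPDF_le_levyPDF_iff hc (sub_pos.2 ht) (hΔ.trans ht), div_sub_sub_div_eq_cosh_log hΔ ht,
    sub_nonneg]

lemma levyPDF_le_levyPDF_sub_of_le {t₁ t₂ : ℝ} (hc : 0 < c) (hΔ : 0 < Δ) (h₁ : Δ < t₁)
    (h₁₂ : t₁ ≤ t₂) (h : levyPDF c t₁ ≤ levyPDF c (t₁ - Δ)) :
    levyPDF c t₂ ≤ levyPDF c (t₂ - Δ) := by
  have h₂ : Δ < t₂ := h₁.trans_le h₁₂
  rw [levyPDF_le_levyPDF_sub_iff hc hΔ h₁] at h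
  rw [levyPDF_le_levyPDF_sub_iff hc hΔ h₂]
  have hu : log (t₂ / (t₂ - Δ)) ∈ segment ℝ 0 (log (t₁ / (t₁ - Δ))) := by
    have hs₁ : 0 < t₁ - Δ := sub_pos.2 h₁
    have hs₂ : 0 < t₂ - Δ := sub_pos.2 h₂
    rw [segment_eq_Icc (log_nonneg ((one_le_div hs₁).2 (by linarith)))]
    refine ⟨log_nonneg ((one_le_div hs₂).2 (by linarith)), log_le_log (div_pos (by linarith) hs₂) ?_⟩
    rw [div_le_div_iff₀ hs₂ hs₁]
    nlinarith
  have hφ := (concaveOn_mul_sub_mul_cosh_sub_one 3 (by positivity : 0 ≤ 2 * c / Δ)).ge_on_segment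
    (mem_univ 0) (mem_univ _) hu
  simp only [mul_zero, cosh_zero, sub_self] at hφ
  exact (le_min le_rfl h).trans hφ

end LevyDensity

/-- Existence of the ML threshold for system A: there is `th_A` with
`Δ < th_A ≤ c/3 + Δ` such that the likelihood under input 0 exceeds the likelihood
under input `Δ` exactly for outputs below `th_A`. -/
theorem systemA_threshold_exists (c Δ : ℝ) (hc : 0 < c) (hΔ : 0 < Δ) :
    ∃ thA : ℝ, Δ < thA ∧ thA ≤ c / 3 + Δ ∧
      (∀ t : ℝ, 0 < t → t < thA → levyPDF c t > levyPDF c (t - Δ)) ∧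
      (∀ t : ℝ, thA ≤ t → levyPDF c t ≤ levyPDF c (t - Δ)) := by
  set S := {t | Δ ≤ t ∧ levyPDF c t ≤ levyPDF c (t - Δ)}
  have hS : IsClosed S := isClosed_Ici.inter <|
    isClosed_le (continuous_levyPDF hc) ((continuous_levyPDF hc).comp (continuous_sub_right Δ))
  have hmem : c / 3 + Δ ∈ S := ⟨le_add_of_nonneg_left (by positivity), by
    rw [add_sub_cancel_right]
    exact antitoneOn_levyPDF hc self_mem_Ici (le_add_of_nonneg_right hΔ.le) (by linarith)⟩
  have hbdd : BddBelow S := ⟨Δ, fun t ht => ht.1⟩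
  have hinf : sInf S ∈ S := hS.csInf_mem ⟨_, hmem⟩ hbdd
  have hΔinf : Δ < sInf S := hinf.1.lt_of_ne fun h => by
    have h₀ := hinf.2
    rw [← h, sub_self, levyPDF_of_nonpos le_rfl] at h₀
    exact (levyPDF_pos hc hΔ).not_ge h₀
  refine ⟨sInf S, hΔinf, csInf_le hbdd hmem, fun t ht htS => ?_,
    fun t ht => levyPDF_le_levyPDF_sub_of_le hc hΔ hΔinf ht hinf.2⟩
  rcases le_or_gt t Δ with htΔ | htΔ
  · rw [levyPDF_of_nonpos (sub_nonpos.2 htΔ)]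
    exact levyPDF_pos hc ht
  · exact lt_of_not_ge fun h => htS.not_ge (csInf_le hbdd ⟨htΔ.le, h⟩)
end
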